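/- arXiv:1607.01006 — 2 statements merged into one kernel-verified Lean document; each statement's English description precedes it below -/
import Mathlib

section
/- For every nonnegative integer n, ∑_{k=0}^{n} C(2n-k, n) · H_k^{(2)} = (1/2) · C(2n+1, n) · ( H_{2n+1}^{(2)} - (H_{2n+1} - H_n)^2 ), where H_j^{(2)} = ∑_{i=1}^j 1/i^2 and H_j = ∑_{i=1}^j 1/i. -/
/-!
Summation by parts turns the left-hand side into `∑_{k=1}^n C(2n+1-k, n+1) / k²`, and
`C(2n+1-k, n+1) = C(2n+1, n) · C(n,k) / C(2n+1,k)`. So the claim is about the sums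
`S_p(N, n) = ∑_{k=1}^n C(n,k) / (C(N,k) k^p)` (`chooseRatioSum p N n`). Pascal's rule in `n`
gives `S_{p+1}(N, n+1) = S_{p+1}(N, n) + S_p(N, n+1) / (n+1)`, and `S_0(N, n) = n / (N+1-n)` is a
hockey-stick sum; hence `S_1(N, n) = H_N - H_{N-n}` and `S_2(N, n) = ∑_{m=1}^n (H_N - H_{N-m}) / m`.
For `N = 2n+1` this last sum is evaluated by induction on `n`, using the partial fractions
`1 / (m (c - m)) = (1/m + 1/(c - m)) / c`.
-/

open Finset

noncomputable def H (n : ℕ) : ℝ := ∑ i ∈ Finset.range n, (1:ℝ)/(i+1)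
noncomputable def H2 (n : ℕ) : ℝ := ∑ i ∈ Finset.range n, (1:ℝ)/((i:ℝ)+1)^2

theorem sum_choose_mul_sum_range {R : Type*} [Semiring R] (m n : ℕ) (f : ℕ → R) :
    ∑ k ∈ range (n + 1), ((m + n - k).choose m : R) * ∑ j ∈ range k, f j =
      ∑ j ∈ range n, ((m + n - j).choose (m + 1) : R) * f j := by
  induction n with
  | zero => simp
  | succ n ih =>
    have hleft : ∀ k ∈ range (n + 1), ((m + (n + 1) - (k + 1)).choose m : R) *
        ∑ j ∈ range (k + 1), f j =
          ((m + n - k).choose m : R) * ∑ j ∈ range k, f j + ((m + n - k).choose m : R) * f k := by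
      intro k _
      rw [sum_range_succ, mul_add, show m + (n + 1) - (k + 1) = m + n - k by omega]
    have hright : ∀ j ∈ range (n + 1), ((m + (n + 1) - j).choose (m + 1) : R) * f j =
        ((m + n - j).choose m : R) * f j + ((m + n - j).choose (m + 1) : R) * f j := by
      intro j hj
      rw [show m + (n + 1) - j = m + n - j + 1 by have := mem_range.mp hj; omega,
        Nat.choose_succ_succ', Nat.cast_add, add_mul]
    rw [sum_range_succ', sum_congr rfl hleft, sum_add_distrib, ih, sum_congr rfl hright,
      sum_add_distrib, sum_range_succ (fun j => ((m + n - j).choose (m + 1) : R) * f j) n]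
    simp only [sum_range_zero, mul_zero, add_zero, Nat.add_sub_cancel, Nat.choose_succ_self,
      Nat.cast_zero, zero_mul]
    exact add_comm _ _

noncomputable def chooseRatioSum (p N n : ℕ) : ℝ :=
  ∑ k ∈ range n, (n.choose (k + 1) : ℝ) / (N.choose (k + 1) * ((k : ℝ) + 1) ^ p)

theorem chooseRatioSum_succ_succ (p N n : ℕ) :
    chooseRatioSum (p + 1) N (n + 1) =
      chooseRatioSum (p + 1) N n + chooseRatioSum p N (n + 1) / (n + 1) := by
  have hterm (k : ℕ) : (n.choose k : ℝ) / (N.choose (k + 1) * ((k : ℝ) + 1) ^ (p + 1)) =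
      ((n + 1).choose (k + 1) : ℝ) / (N.choose (k + 1) * ((k : ℝ) + 1) ^ p) / (n + 1) := by
    have h : (n.choose k : ℝ) / (k + 1) = (n + 1).choose (k + 1) / (n + 1) := by
      rw [div_eq_div_iff (by positivity) (by positivity), mul_comm (n.choose k : ℝ)]
      exact_mod_cast Nat.add_one_mul_choose_eq n k
    rw [pow_succ, ← mul_assoc, ← div_div, div_right_comm, h, div_right_comm]
  simp only [chooseRatioSum, Nat.choose_succ_succ', Nat.cast_add, add_div, sum_add_distrib,
    sum_div, hterm, sum_range_succ _ n, Nat.choose_succ_self, Nat.cast_zero, zero_div, add_zero]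
  ring

theorem chooseRatioSum_succ_eq_sum (p N n : ℕ) :
    chooseRatioSum (p + 1) N n = ∑ m ∈ range n, chooseRatioSum p N (m + 1) / (m + 1) := by
  induction n with
  | zero => simp [chooseRatioSum]
  | succ n ih => rw [chooseRatioSum_succ_succ, ih, sum_range_succ]

theorem choose_mul_chooseRatioSum {N n : ℕ} (h : n ≤ N) (p : ℕ) :
    (N.choose n : ℝ) * chooseRatioSum p N n =
      ∑ k ∈ range n, ((N - (k + 1)).choose (N - n) : ℝ) / ((k : ℝ) + 1) ^ p := by
  rw [chooseRatioSum, mul_sum]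
  refine sum_congr rfl fun k hk => ?_
  have hk : k + 1 ≤ n := mem_range.mp hk
  have h : (N.choose n : ℝ) * n.choose (k + 1) =
      N.choose (k + 1) * (N - (k + 1)).choose (N - n) := by
    rw [← Nat.choose_symm_of_eq_add (show N - (k + 1) = (n - (k + 1)) + (N - n) by omega)]
    exact_mod_cast Nat.choose_mul hk
  have hN : (N.choose (k + 1) : ℝ) ≠ 0 := by exact_mod_cast (Nat.choose_pos (by omega)).ne'
  field_simp
  linear_combination h

theorem sum_range_choose_sub_add_one {N n : ℕ} (h : n ≤ N) :
    ∑ k ∈ range n, (N - (k + 1)).choose (N - n) = N.choose (N - n + 1) := by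
  obtain ⟨a, rfl⟩ := Nat.exists_eq_add_of_le h
  rcases n with _ | n
  · simp
  calc ∑ k ∈ range (n + 1), (n + 1 + a - (k + 1)).choose (n + 1 + a - (n + 1))
      = ∑ k ∈ range (n + 1), (fun j => (j + a).choose a) (n + 1 - 1 - k) :=
        sum_congr rfl fun k hk => by rw [mem_range] at hk; congr 1 <;> omega
    _ = (n + 1 + a).choose (n + 1 + a - (n + 1) + 1) := by
        rw [sum_range_reflect (fun j => (j + a).choose a) (n + 1), Nat.sum_range_add_choose]
        congr 1 <;> omega

theorem chooseRatioSum_zero {N n : ℕ} (h : n ≤ N) :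
    chooseRatioSum 0 N n = n / ((N : ℝ) + 1 - n) := by
  have hsum := choose_mul_chooseRatioSum h 0
  simp only [pow_zero, div_one] at hsum
  rw [← Nat.cast_sum, sum_range_choose_sub_add_one h] at hsum
  have hratio : (N.choose (N - n + 1) : ℝ) * ((N : ℝ) - n + 1) = N.choose n * n := by
    have h' := Nat.choose_succ_right_eq N (N - n)
    rw [Nat.sub_sub_self h, Nat.choose_symm h] at h'
    rw [← Nat.cast_sub h]
    exact_mod_cast h'
  have hN : (N.choose n : ℝ) ≠ 0 := by exact_mod_cast (Nat.choose_pos h).ne'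
  have hn : (n : ℝ) ≤ N := by exact_mod_cast h
  rw [eq_div_iff (by linarith)]
  apply mul_left_cancel₀ hN
  linear_combination hsum * ((N : ℝ) - n + 1) + hratio

theorem H_succ (n : ℕ) : H (n + 1) = H n + 1 / (n + 1) := by
  simp [H, sum_range_succ]

theorem H2_succ (n : ℕ) : H2 (n + 1) = H2 n + 1 / ((n : ℝ) + 1) ^ 2 := by
  simp [H2, sum_range_succ]

theorem chooseRatioSum_one {N n : ℕ} (h : n ≤ N) :
    chooseRatioSum 1 N n = H N - H (N - n) := by
  induction n with
  | zero => simp [chooseRatioSum]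
  | succ n ih =>
    rw [chooseRatioSum_succ_succ, ih (by omega), chooseRatioSum_zero h,
      show N - n = N - (n + 1) + 1 by omega, H_succ]
    have : (n : ℝ) + 1 ≤ N := by exact_mod_cast h
    push_cast [Nat.cast_sub h]
    field_simp
    ring

theorem sum_range_inv_add_sub (a n : ℕ) :
    ∑ m ∈ range n, 1 / ((a : ℝ) + n - m) = H (a + n) - H a := by
  induction n with
  | zero => simp
  | succ n ih =>
    rw [sum_range_succ', ← add_assoc, H_succ]
    push_cast
    simp only [← add_assoc, add_sub_add_right_eq_sub, sub_zero, ih]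
    ring

theorem sum_range_inv_mul_inv_add_sub (a n : ℕ) :
    ∑ m ∈ range n, 1 / (((m : ℝ) + 1) * (a + n - m)) =
      (H n + H (a + n) - H a) / (a + n + 1) := by
  have hsplit : ∀ m ∈ range n, 1 / (((m : ℝ) + 1) * (a + n - m)) =
      (1 / ((m : ℝ) + 1) + 1 / ((a : ℝ) + n - m)) / (a + n + 1) := by
    intro m hm
    have : (m : ℝ) < n := by exact_mod_cast mem_range.mp hm
    have : (a : ℝ) + n - m ≠ 0 := by have : (0 : ℝ) ≤ a := a.cast_nonneg; linarith
    field_simp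
    ring
  rw [sum_congr rfl hsplit, ← sum_div, sum_add_distrib, sum_range_inv_add_sub, add_sub_assoc]
  rfl

theorem sum_range_harmonic_sub_div (n : ℕ) :
    ∑ m ∈ range n, (H (2 * n + 1) - H (2 * n - m)) / (m + 1) =
      (H2 (2 * n + 1) - (H (2 * n + 1) - H n) ^ 2) / 2 := by
  induction n with
  | zero => simp [H, H2]
  | succ n ih =>
    have hterm : ∀ m ∈ range n, (H (2 * (n + 1) + 1) - H (2 * (n + 1) - m)) / ((m : ℝ) + 1) =
        (H (2 * n + 1) - H (2 * n - m)) / (m + 1) +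
          (1 / (2 * n + 2) + 1 / (2 * n + 3)) * (1 / (m + 1)) -
          1 / ((m + 1) * ((n + 1 : ℕ) + n - m)) - 1 / ((m + 1) * ((n + 2 : ℕ) + n - m)) := by
      intro m hm
      have hm : m < n := mem_range.mp hm
      rw [show 2 * (n + 1) - m = 2 * n - m + 1 + 1 by omega,
        show 2 * (n + 1) + 1 = 2 * n + 1 + 1 + 1 by ring,
        H_succ (2 * n + 1 + 1), H_succ (2 * n + 1), H_succ (2 * n - m + 1), H_succ (2 * n - m)]
      push_cast [Nat.cast_sub (show m ≤ 2 * n by omega)]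
      have : (m : ℝ) + 1 ≤ n := by exact_mod_cast hm
      have : (n : ℝ) + 1 + n - m ≠ 0 := by linarith
      have : (n : ℝ) + 2 + n - m ≠ 0 := by linarith
      have : 2 * (n : ℝ) - m + 1 ≠ 0 := by linarith
      have : 2 * (n : ℝ) - m + 1 + 1 ≠ 0 := by linarith
      field_simp
      ring
    rw [sum_range_succ, sum_congr rfl hterm, sum_sub_distrib, sum_sub_distrib, sum_add_distrib,
      ← mul_sum, ih, sum_range_inv_mul_inv_add_sub, sum_range_inv_mul_inv_add_sub,
      show n + 1 + n = 2 * n + 1 by ring, show n + 2 + n = 2 * n + 1 + 1 by ring,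
      show 2 * (n + 1) + 1 = 2 * n + 1 + 1 + 1 by ring, show 2 * (n + 1) - n = n + 1 + 1 by omega,
      show ∑ m ∈ range n, 1 / ((m : ℝ) + 1) = H n from rfl]
    simp only [H_succ, H2_succ]
    push_cast
    field_simp
    ring

theorem stmt2 (n : ℕ) :
    ∑ k ∈ Finset.range (n+1), (((2*n-k).choose n : ℕ) : ℝ) * H2 k
      = (1/2) * (((2*n+1).choose n : ℕ) : ℝ) * (H2 (2*n+1) - (H (2*n+1) - H n)^2) := by
  calc ∑ k ∈ range (n + 1), (((2 * n - k).choose n : ℕ) : ℝ) * H2 k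
      = ∑ j ∈ range n, (((n + n - j).choose (n + 1) : ℕ) : ℝ) * (1 / ((j : ℝ) + 1) ^ 2) := by
        rw [← sum_choose_mul_sum_range, two_mul]; rfl
    _ = ((2 * n + 1).choose n : ℝ) * chooseRatioSum 2 (2 * n + 1) n := by
        rw [choose_mul_chooseRatioSum (by omega)]
        refine sum_congr rfl fun j _ => ?_
        rw [mul_one_div, show 2 * n + 1 - (j + 1) = n + n - j by omega,
          show 2 * n + 1 - n = n + 1 by omega]
    _ = ((2 * n + 1).choose n : ℝ) *
          ∑ m ∈ range n, (H (2 * n + 1) - H (2 * n - m)) / (m + 1) := by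
        rw [chooseRatioSum_succ_eq_sum]
        refine congrArg _ (sum_congr rfl fun m hm => ?_)
        rw [chooseRatioSum_one (by have := mem_range.mp hm; omega),
          show 2 * n + 1 - (m + 1) = 2 * n - m by omega]
    _ = _ := by rw [sum_range_harmonic_sub_div]; ring
end

section
/- For every nonnegative integer n and complex x avoiding poles, ∑_{k=0}^{n} C(2n-k, n) · C(x+k, k) · k · H_k(x) = (x+1) · C(x+2n+1, n-1) · ( H_{2n+1}(x) - H_{n+1}(x+1) ), where H_j(x) = ∑_{i=1}^j 1/(x+i). -/
open Finset

noncomputable def Hx (x : ℝ) (n : ℕ) : ℝ := ∑ i ∈ Finset.range n, 1/(x+(i:ℝ)+1)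
noncomputable def gch (y : ℝ) (s : ℕ) : ℝ := (∏ i ∈ Finset.range s, (y - (i:ℝ))) / (Nat.factorial s)

noncomputable def gchZ (y : ℝ) (s : ℤ) : ℝ :=
  if s < 0 then 0 else gch y s.toNat

/-!
Without the harmonic factors the sum is a polynomial identity in `x`,
`∑ₖ C(2n-k, n) · k · C(x+k, k) = (x+1) · C(x+2n+1, n-1)`: absorbing `k` into `C(x+k, k)` and
negating the upper indices turns it into the Chu–Vandermonde identity. Differentiating in `x`,
with `d/dx C(x+c, k) = C(x+c, k) · ∑_{i<k} 1/(x+c-i)`, gives the theorem.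
-/

theorem gch_eq_choose (y : ℝ) (s : ℕ) : gch y s = Ring.choose y s := by
  rw [Ring.choose_eq_smul, ← Polynomial.aeval_eq_smeval, ← Polynomial.eval_map_algebraMap,
    descPochhammer_map, descPochhammer_eval_eq_prod_range, gch, smul_eq_mul, div_eq_inv_mul]

namespace Ring

variable {R : Type*} [CommRing R] [BinomialRing R]

theorem choose_add_self_eq_negOnePow_smul (y : R) (n : ℕ) :
    choose (y + n) n = Int.negOnePow n • choose (-(y + 1)) n := by
  rw [choose_neg, smul_smul, ← Int.negOnePow_add, Int.negOnePow_even _ (by simp), one_smul]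
  congr 1; abel

theorem succ_nsmul_choose_succ (r : R) (k : ℕ) :
    (k + 1) • choose r (k + 1) = choose r k * (r - k) := by
  simpa using choose_smul_choose r (Nat.le_succ k)

theorem sum_antidiagonal_choose_add_self (y z : R) (m : ℕ) :
    ∑ ij ∈ antidiagonal m, choose (y + ij.1) ij.1 * choose (z + ij.2) ij.2
      = choose (y + z + 1 + m) m := by
  rw [choose_add_self_eq_negOnePow_smul, show -(y + z + 1 + 1) = -(y + 1) + -(z + 1) by abel,
    add_choose_eq _ (Commute.all _ _), smul_sum]
  refine sum_congr rfl fun ij hij => ?_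
  rw [choose_add_self_eq_negOnePow_smul, choose_add_self_eq_negOnePow_smul, smul_mul_smul_comm,
    ← Int.negOnePow_add, ← Nat.cast_add, mem_antidiagonal.mp hij]

theorem sum_choose_mul_mul_choose_add_self (y : R) (m : ℕ) :
    ∑ k ∈ range (m + 2), (((2 * (m + 1) - k).choose (m + 1) : ℕ) : R) * k * choose (y + k) k
      = (y + 1) * choose (y + 2 * m + 3) m := by
  have hshift (i : ℕ) (hi : i ∈ range (m + 1)) :
      (((2 * (m + 1) - (i + 1)).choose (m + 1) : ℕ) : R) * ↑(i + 1) *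
          choose (y + ↑(i + 1)) (i + 1)
        = (y + 1) *
          (choose (y + 1 + i) i * choose (((m + 1 : ℕ) : R) + (m - i : ℕ)) (m - i)) := by
    have hi := mem_range.mp hi
    have hsymm : (2 * (m + 1) - (i + 1)).choose (m + 1) = (m + 1 + (m - i)).choose (m - i) := by
      rw [show 2 * (m + 1) - (i + 1) = m + 1 + (m - i) by omega, Nat.choose_symm_add]
    have habs := succ_nsmul_choose_succ (y + 1 + i) i
    rw [nsmul_eq_mul, add_sub_cancel_right, Nat.cast_succ] at habs
    rw [hsymm, ← Nat.cast_add, choose_natCast, mul_assoc, Nat.cast_succ,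
      show y + (i + 1) = y + 1 + i by ring, habs]
    ring
  rw [sum_range_succ', sum_congr rfl hshift, ← mul_sum,
    ← Finset.Nat.sum_antidiagonal_eq_sum_range_succ_mk (fun ij => choose (y + 1 + ij.1) ij.1 *
      choose (((m + 1 : ℕ) : R) + ij.2) ij.2), sum_antidiagonal_choose_add_self]
  push_cast
  ring_nf

end Ring

theorem hasDerivAt_prod_add {𝕜 ι : Type*} [NontriviallyNormedField 𝕜] [DecidableEq ι]
    (s : Finset ι) (a : ι → 𝕜) {x : 𝕜} (h : ∀ i ∈ s, x + a i ≠ 0) :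
    HasDerivAt (fun y => ∏ i ∈ s, (y + a i))
      ((∏ i ∈ s, (x + a i)) * ∑ i ∈ s, (x + a i)⁻¹) x := by
  refine (HasDerivAt.fun_finsetProd fun i _ => (hasDerivAt_id x).add_const (a i)).congr_deriv ?_
  rw [mul_sum]
  refine sum_congr rfl fun i hi => ?_
  rw [id, smul_eq_mul, mul_one, ← prod_erase_mul _ _ hi, mul_inv_cancel_right₀ (h i hi)]

theorem hasDerivAt_gch_add (c x : ℝ) (k : ℕ) (h : ∀ i ∈ range k, x + c - i ≠ 0) :
    HasDerivAt (fun y => gch (y + c) k)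
      (gch (x + c) k * ∑ i ∈ range k, (x + c - i)⁻¹) x := by
  simp only [gch, add_sub_assoc] at h ⊢
  rw [div_mul_eq_mul_div]
  exact (hasDerivAt_prod_add _ _ h).div_const _

theorem Hx_add_one (x : ℝ) (k : ℕ) : Hx (x + 1) k = Hx x (k + 1) - 1 / (x + 1) := by
  simp only [Hx, sum_range_succ', Nat.cast_add, Nat.cast_one, Nat.cast_zero]
  ring_nf

theorem sum_range_inv_sub_eq_Hx_sub (x : ℝ) (j k : ℕ) :
    ∑ i ∈ range k, (x + ↑(j + k) - i)⁻¹ = Hx x (j + k) - Hx x j := by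
  rw [Hx, Hx, sum_range_add, add_sub_cancel_left, ← sum_range_reflect]
  refine sum_congr rfl fun i hi => ?_
  rw [one_div, Nat.sub_sub, Nat.cast_sub (by simp at hi; omega)]
  push_cast
  ring_nf

theorem hasDerivAt_gch_add_natCast (x : ℝ) (j k : ℕ)
    (h : ∀ i : ℕ, 1 ≤ i → x + i ≠ 0) :
    HasDerivAt (fun y => gch (y + ↑(j + k)) k)
      (gch (x + ↑(j + k)) k * (Hx x (j + k) - Hx x j)) x := by
  rw [← sum_range_inv_sub_eq_Hx_sub]
  refine hasDerivAt_gch_add _ x k fun i hi => ?_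
  have hi := mem_range.mp hi
  rw [add_sub_assoc, ← Nat.cast_sub (by omega)]
  exact h _ (by omega)

theorem stmt15 (x : ℝ) (hx : ∀ i : ℕ, 1 ≤ i → x + (i:ℝ) ≠ 0) (n : ℕ) :
    ∑ k ∈ Finset.range (n+1),
        (((2*n-k).choose n : ℕ) : ℝ) * gch (x+(k:ℝ)) k * (k:ℝ) * Hx x k
      = (x+1) * gchZ (x+2*(n:ℝ)+1) ((n:ℤ)-1) * (Hx x (2*n+1) - Hx (x+1) (n+1)) := by
  obtain _ | m := n
  · simp [gchZ]
  have hpoly : (fun y => ∑ k ∈ range (m + 2),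
        (((2 * (m + 1) - k).choose (m + 1) : ℕ) : ℝ) * k * gch (y + k) k)
      = fun y => (y + 1) * gch (y + ↑(m + 3 + m)) m := by
    funext y
    simp only [gch_eq_choose, Ring.sum_choose_mul_mul_choose_add_self]
    push_cast
    ring_nf
  have hL : HasDerivAt (fun y => ∑ k ∈ range (m + 2),
        (((2 * (m + 1) - k).choose (m + 1) : ℕ) : ℝ) * k * gch (y + k) k)
      (∑ k ∈ range (m + 2),
        (((2 * (m + 1) - k).choose (m + 1) : ℕ) : ℝ) * k * (gch (x + k) k * Hx x k)) x :=
    HasDerivAt.fun_sum fun k _ => by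
      simpa [Hx] using (hasDerivAt_gch_add_natCast x 0 k hx).const_mul _
  have hR := ((hasDerivAt_id' x).add_const 1).mul (hasDerivAt_gch_add_natCast x (m + 3) m hx)
  rw [hpoly] at hL
  have hgchZ : gchZ (x + 2 * ↑(m + 1) + 1) (↑(m + 1) - 1) = gch (x + ↑(m + 3 + m)) m := by
    rw [gchZ, if_neg (by omega)]
    congr 1
    · push_cast
      ring
    · simp
  have hx1 : x + 1 ≠ 0 := by simpa using hx 1 le_rfl
  calc _ = ∑ k ∈ range (m + 2),
        (((2 * (m + 1) - k).choose (m + 1) : ℕ) : ℝ) * k * (gch (x + k) k * Hx x k) :=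
        sum_congr rfl fun _ _ => by ring
    _ = _ := hL.unique hR
    _ = _ := by
      rw [hgchZ, Hx_add_one, show 2 * (m + 1) + 1 = m + 3 + m by ring]
      field_simp
      ring
end
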